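/- arXiv:1206.5705 — 3 statements merged into one kernel-verified Lean document; each statement's English description precedes it below -/
import Mathlib

section
/- Let H be a real Hilbert space, α > 0, φ : [0,+∞[ → [0,+∞[ strictly increasing with φ(t) → +∞, let (Wₙ) and W be bounded self-adjoint operators with Wₙ ≽ α·Id, W ≽ α·Id, and Wₙ → W pointwise strongly. Let C ⊆ H be nonempty and (xₙ) be φ-quasi-Fejér monotone with respect to C relative to (Wₙ). Then (xₙ) converges weakly to a point in C if and only if every weak sequential cluster point of (xₙ) lies in C. -/
/-! For every `z ∈ C` the real sequence `φ ‖xₙ - z‖_{Wₙ}` satisfies a quasi-Fejér recursion, so it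
is bounded and then convergent; as `φ` is strictly increasing and unbounded, `‖xₙ - z‖_{Wₙ}`
converges too. Hence `(xₙ)` is bounded and, by sequential Banach–Alaoglu, every subsequence has a
weakly convergent subsequence, whose limit lies in `C`. Two such limits `u`, `v` coincide:
expanding the quadratic forms, `⟪xₙ, Wₙ (u - v)⟫` converges, hence so does `⟪xₙ, W (u - v)⟫`,
and comparing its limits along the two subsequences gives `⟪W (u - v), u - v⟫ = 0`. -/

open Filter Topology

noncomputable def wnorm {H : Type*} [NormedAddCommGroup H] [InnerProductSpace ℝ H]
    (W : H →L[ℝ] H) (x : H) : ℝ :=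
  Real.sqrt (inner ℝ (W x) x : ℝ)

open Set
open scoped InnerProductSpace

section RealSequences

theorem exists_tendsto_of_le_add_summable {a r : ℕ → ℝ} (hr : Summable r)
    (ha : BddBelow (range a)) (h : ∀ n, a (n + 1) ≤ a n + r n) :
    ∃ L, Tendsto a atTop (𝓝 L) := by
  set S : ℕ → ℝ := fun n => ∑ k ∈ Finset.range n, r k
  have hS : Tendsto S atTop (𝓝 (∑' k, r k)) := hr.hasSum.tendsto_sum_nat
  obtain ⟨m, hm⟩ := ha
  obtain ⟨M, hM⟩ := hS.bddAbove_range
  have hanti : Antitone fun n => a n - S n := antitone_nat_of_succ_le fun n => by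
    simp only [S, Finset.sum_range_succ]
    linarith [h n]
  have hbdd : BddBelow (range fun n => a n - S n) := ⟨m - M, by
    rintro _ ⟨n, rfl⟩
    linarith [hm ⟨n, rfl⟩, hM ⟨n, rfl⟩]⟩
  exact ⟨_, by simpa using (tendsto_atTop_ciInf hanti hbdd).add hS⟩

theorem bddAbove_of_le_one_add_mul_add {a η ε : ℕ → ℝ} (hη0 : ∀ n, 0 ≤ η n) (hη : Summable η)
    (hε0 : ∀ n, 0 ≤ ε n) (hε : Summable ε) (h : ∀ n, a (n + 1) ≤ (1 + η n) * a n + ε n) :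
    BddAbove (range a) := by
  have key : ∀ n, max (a n) 0 ≤
      (max (a 0) 0 + ∑ k ∈ Finset.range n, ε k) * Real.exp (∑ k ∈ Finset.range n, η k) := by
    intro n
    induction n with
    | zero => simp
    | succ n ih =>
      -- `max (a n) 0` obeys the same recursion, and `1 + η n ≤ exp (η n)`.
      set A := max (a 0) 0 + ∑ k ∈ Finset.range n, ε k
      set E := Real.exp (∑ k ∈ Finset.range n, η k)
      have hE : 1 ≤ E := Real.one_le_exp (Finset.sum_nonneg fun k _ => hη0 k)
      have he : 1 ≤ Real.exp (η n) := Real.one_le_exp (hη0 n)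
      rw [Finset.sum_range_succ, Finset.sum_range_succ, Real.exp_add, ← add_assoc]
      have hη1 : 0 ≤ 1 + η n := by linarith [hη0 n]
      have hεn := hε0 n
      calc max (a (n + 1)) 0 ≤ (1 + η n) * max (a n) 0 + ε n :=
            max_le ((h n).trans (by gcongr; exact le_max_left _ _)) (by positivity)
        _ ≤ Real.exp (η n) * (A * E) + ε n * (E * Real.exp (η n)) := by
            gcongr
            · linarith [Real.add_one_le_exp (η n)]
            · exact le_mul_of_one_le_right (hε0 n) (one_le_mul_of_one_le_of_one_le hE he)
        _ = (A + ε n) * (E * Real.exp (η n)) := by ring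
  refine ⟨(max (a 0) 0 + ∑' k, ε k) * Real.exp (∑' k, η k), ?_⟩
  rintro _ ⟨n, rfl⟩
  refine (le_max_left _ _).trans ((key n).trans ?_)
  gcongr
  · exact add_nonneg (le_max_right _ _) (tsum_nonneg hε0)
  · exact hε.sum_le_tsum _ fun k _ => hε0 k
  · exact hη.sum_le_tsum _ fun k _ => hη0 k

theorem exists_tendsto_of_le_one_add_mul_add {a η ε : ℕ → ℝ} (hη0 : ∀ n, 0 ≤ η n)
    (hη : Summable η) (hε0 : ∀ n, 0 ≤ ε n) (hε : Summable ε) (ha : BddBelow (range a))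
    (h : ∀ n, a (n + 1) ≤ (1 + η n) * a n + ε n) :
    ∃ L, Tendsto a atTop (𝓝 L) := by
  obtain ⟨B, hB⟩ := bddAbove_of_le_one_add_mul_add hη0 hη hε0 hε h
  refine exists_tendsto_of_le_add_summable ((hη.mul_right B).add hε) ha fun n => ?_
  have : η n * a n ≤ η n * B := mul_le_mul_of_nonneg_left (hB ⟨n, rfl⟩) (hη0 n)
  linarith [h n]

theorem StrictMonoOn.exists_tendsto_of_tendsto_comp {φ : ℝ → ℝ} {m : ℝ}
    (hφ : StrictMonoOn φ (Ici m)) (hφ_top : Tendsto φ atTop atTop) {ι : Type*} {l : Filter ι}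
    {t : ι → ℝ} (ht : ∀ i, m ≤ t i) {L : ℝ} (hL : Tendsto (fun i => φ (t i)) l (𝓝 L)) :
    ∃ c, Tendsto t l (𝓝 c) := by
  have hbdd : l.IsBoundedUnder (· ≤ ·) t := by
    obtain ⟨T, hT⟩ := eventually_atTop.1 (hφ_top.eventually_gt_atTop (L + 1))
    refine isBoundedUnder_of_eventually_le (a := T) ?_
    filter_upwards [hL.eventually (eventually_lt_nhds (lt_add_one L))] with i hi
    exact le_of_not_gt fun hTi => (hT (t i) hTi.le).not_gt hi
  refine tendsto_of_no_upcrossings dense_univ (fun a _ b _ hab ⟨hlow, hhigh⟩ => ?_) hbdd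
    (isBoundedUnder_of_eventually_ge (a := m) (Eventually.of_forall ht))
  obtain ⟨i, hi⟩ := hlow.exists
  have ha : m ≤ a := (ht i).trans hi.le
  have hb : m ≤ b := ha.trans hab.le
  have hLa : L ≤ φ a := le_of_tendsto_of_frequently hL (hlow.mono fun i hi => (hφ (ht i) ha hi).le)
  have hLb : φ b ≤ L := ge_of_tendsto_of_frequently hL (hhigh.mono fun i hi => (hφ hb (ht i) hi).le)
  exact (hφ ha hb hab).not_ge (hLb.trans hLa)

end RealSequences

section HilbertSpace

variable {H : Type*} [NormedAddCommGroup H] [InnerProductSpace ℝ H]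

def WeakTendsto (x : ℕ → H) (u : H) : Prop :=
  ∀ y : H, Tendsto (fun n => ⟪x n, y⟫_ℝ) atTop (𝓝 ⟪u, y⟫_ℝ)

theorem WeakTendsto.unique {x : ℕ → H} {u v : H} (hu : WeakTendsto x u)
    (hv : WeakTendsto x v) : u = v :=
  ext_inner_right ℝ fun y => tendsto_nhds_unique (hu y) (hv y)

theorem WeakTendsto.comp {x : ℕ → H} {u : H} (h : WeakTendsto x u) {p : ℕ → ℕ}
    (hp : Tendsto p atTop atTop) : WeakTendsto (x ∘ p) u :=
  fun y => (h y).comp hp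

theorem exists_subseq_weakTendsto_of_norm_le [CompleteSpace H] {x : ℕ → H} {M : ℝ}
    (hx : ∀ n, ‖x n‖ ≤ M) : ∃ p : ℕ → ℕ, StrictMono p ∧ ∃ u, WeakTendsto (x ∘ p) u := by
  set K := (Submodule.span ℝ (range x)).topologicalClosure
  have hxK : ∀ n, x n ∈ K := fun n =>
    Submodule.le_topologicalClosure _ (Submodule.subset_span ⟨n, rfl⟩)
  have : TopologicalSpace.SeparableSpace K := by
    have hK := (countable_range x).isSeparable.span (R := ℝ) |>.closure
    rw [← Submodule.topologicalClosure_coe] at hK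
    exact hK.separableSpace
  have : CompleteSpace K :=
    (Submodule.span ℝ (range x)).isClosed_topologicalClosure.completeSpace_coe
  -- Sequential Banach–Alaoglu in the separable Hilbert space `K`, through the Riesz isomorphism.
  let f : ℕ → WeakDual ℝ K := fun n =>
    StrongDual.toWeakDual (InnerProductSpace.toDual ℝ K ⟨x n, hxK n⟩)
  have hf : ∀ n, f n ∈ WeakDual.toStrongDual ⁻¹' Metric.closedBall 0 M := fun n => by
    change dist (InnerProductSpace.toDual ℝ K ⟨x n, hxK n⟩) 0 ≤ M
    rw [dist_zero_right, LinearIsometryEquiv.norm_map]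
    exact hx n
  obtain ⟨ℓ, -, p, hp, hℓ⟩ := WeakDual.isSeqCompact_closedBall ℝ K 0 M hf
  set u := (InnerProductSpace.toDual ℝ K).symm (WeakDual.toStrongDual ℓ)
  refine ⟨p, hp, u, fun y => ?_⟩
  have hfy : ∀ n, f n (K.orthogonalProjectionOnto y) = ⟪x n, y⟫_ℝ := fun n =>
    K.inner_orthogonalProjectionOnto_eq_of_mem_left ⟨x n, hxK n⟩ y
  have hℓy : ℓ (K.orthogonalProjectionOnto y) = ⟪(u : H), y⟫_ℝ := by
    rw [← K.inner_orthogonalProjectionOnto_eq_of_mem_left, InnerProductSpace.toDual_symm_apply]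
    rfl
  have := ((WeakDual.eval_continuous (K.orthogonalProjectionOnto y)).tendsto ℓ).comp hℓ
  simpa only [Function.comp_def, hfy, hℓy] using this

theorem weakTendsto_of_forall_weakTendsto_subseq [CompleteSpace H] {x : ℕ → H} {M : ℝ}
    (hx : ∀ n, ‖x n‖ ≤ M) {u : H}
    (h : ∀ v (q : ℕ → ℕ), StrictMono q → WeakTendsto (x ∘ q) v → v = u) :
    WeakTendsto x u := by
  intro y
  refine tendsto_of_subseq_tendsto fun ns hns => ?_
  obtain ⟨ms, -, hms⟩ := strictMono_subseq_of_tendsto_atTop hns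
  obtain ⟨q, hq, v, hv⟩ := exists_subseq_weakTendsto_of_norm_le fun n => hx (ns (ms n))
  refine ⟨ms ∘ q, ?_⟩
  rw [← h v (ns ∘ ms ∘ q) (hms.comp hq) hv]
  exact hv y

theorem tendsto_inner_of_tendsto_inner_of_tendsto {ι : Type*} {l : Filter ι} {x y : ι → H}
    {M : ℝ} (hx : ∀ i, ‖x i‖ ≤ M) {y₀ : H} (hy : Tendsto y l (𝓝 y₀)) {c : ℝ}
    (h : Tendsto (fun i => ⟪x i, y i⟫_ℝ) l (𝓝 c)) :
    Tendsto (fun i => ⟪x i, y₀⟫_ℝ) l (𝓝 c) := by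
  have hdiff : Tendsto (fun i => ⟪x i, y i - y₀⟫_ℝ) l (𝓝 0) := by
    refine squeeze_zero_norm (fun i => (norm_inner_le_norm _ _).trans
      (mul_le_mul_of_nonneg_right (hx i) (norm_nonneg _))) ?_
    simpa using (tendsto_sub_nhds_zero_iff.2 hy).norm.const_mul M
  simpa [inner_sub_right] using h.sub hdiff

theorem LinearMap.IsSymmetric.inner_sub_sub_inner_sub {T : H →ₗ[ℝ] H} (hT : T.IsSymmetric)
    (x u v : H) :
    ⟪T (x - v), x - v⟫_ℝ - ⟪T (x - u), x - u⟫_ℝ =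
      2 * ⟪x, T (u - v)⟫_ℝ + ⟪T v, v⟫_ℝ - ⟪T u, u⟫_ℝ := by
  simp only [map_sub, inner_sub_left, inner_sub_right, hT x u, hT x v, real_inner_comm x (T u),
    real_inner_comm x (T v)]
  ring

theorem eq_of_weakTendsto_of_tendsto_inner_sub {W : ℕ → H →L[ℝ] H} {Wl : H →L[ℝ] H}
    (hW : ∀ n, (W n : H →ₗ[ℝ] H).IsSymmetric) (hWl : ∀ z, ⟪Wl z, z⟫_ℝ = 0 → z = 0)
    (hWconv : ∀ z, Tendsto (fun n => W n z) atTop (𝓝 (Wl z)))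
    {x : ℕ → H} {M : ℝ} (hx : ∀ n, ‖x n‖ ≤ M) {u v : H}
    (hu : ∃ l, Tendsto (fun n => ⟪W n (x n - u), x n - u⟫_ℝ) atTop (𝓝 l))
    (hv : ∃ l, Tendsto (fun n => ⟪W n (x n - v), x n - v⟫_ℝ) atTop (𝓝 l))
    {p q : ℕ → ℕ} (hp : Tendsto p atTop atTop) (hq : Tendsto q atTop atTop)
    (hxp : WeakTendsto (x ∘ p) u) (hxq : WeakTendsto (x ∘ q) v) : u = v := by
  obtain ⟨lu, hlu⟩ := hu
  obtain ⟨lv, hlv⟩ := hv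
  have hquad : ∀ z, Tendsto (fun n => ⟪W n z, z⟫_ℝ) atTop (𝓝 ⟪Wl z, z⟫_ℝ) := fun z =>
    (hWconv z).inner tendsto_const_nhds
  -- The difference of the two convergent quadratic forms is affine in `x n`.
  have hlim : Tendsto (fun n => ⟪x n, Wl (u - v)⟫_ℝ) atTop
      (𝓝 ((lv - lu - ⟪Wl v, v⟫_ℝ + ⟪Wl u, u⟫_ℝ) / 2)) := by
    refine tendsto_inner_of_tendsto_inner_of_tendsto hx (hWconv (u - v)) ?_
    refine ((((hlv.sub hlu).sub (hquad v)).add (hquad u)).div_const 2).congr fun n => ?_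
    have := (hW n).inner_sub_sub_inner_sub (x n) u v
    simp only [ContinuousLinearMap.coe_coe] at this
    linarith
  have hu' := tendsto_nhds_unique (hxp _) (hlim.comp hp)
  have hv' := tendsto_nhds_unique (hxq _) (hlim.comp hq)
  refine sub_eq_zero.1 (hWl _ ?_)
  rw [real_inner_comm, inner_sub_left, hu', hv', sub_self]

theorem exists_tendsto_inner_of_quasiFejer {φ : ℝ → ℝ} (hφ : StrictMonoOn φ (Ici 0))
    (hφ_top : Tendsto φ atTop atTop) {W : ℕ → H →L[ℝ] H} (hW : ∀ n z, 0 ≤ ⟪W n z, z⟫_ℝ)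
    {y : ℕ → H} {η ε : ℕ → ℝ} (hη0 : ∀ n, 0 ≤ η n) (hη : Summable η)
    (hε0 : ∀ n, 0 ≤ ε n) (hε : Summable ε)
    (h : ∀ n, φ (wnorm (W (n + 1)) (y (n + 1))) ≤ (1 + η n) * φ (wnorm (W n) (y n)) + ε n) :
    ∃ l, Tendsto (fun n => ⟪W n (y n), y n⟫_ℝ) atTop (𝓝 l) := by
  have ht : ∀ n, 0 ≤ wnorm (W n) (y n) := fun n => Real.sqrt_nonneg _
  have hbdd : BddBelow (range fun n => φ (wnorm (W n) (y n))) := ⟨φ 0, by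
    rintro _ ⟨n, rfl⟩
    exact hφ.monotoneOn self_mem_Ici (ht n) (ht n)⟩
  obtain ⟨L, hL⟩ := exists_tendsto_of_le_one_add_mul_add hη0 hη hε0 hε hbdd h
  obtain ⟨c, hc⟩ := hφ.exists_tendsto_of_tendsto_comp hφ_top ht hL
  exact ⟨c ^ 2, (hc.pow 2).congr fun n => Real.sq_sqrt (hW n (y n))⟩

theorem exists_norm_le_of_tendsto_inner_sub {α : ℝ} (hα : 0 < α) {W : ℕ → H →L[ℝ] H}
    (hW : ∀ n z, α * ‖z‖ ^ 2 ≤ ⟪W n z, z⟫_ℝ) {x : ℕ → H} {z : H} {l : ℝ}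
    (hl : Tendsto (fun n => ⟪W n (x n - z), x n - z⟫_ℝ) atTop (𝓝 l)) :
    ∃ M, ∀ n, ‖x n‖ ≤ M := by
  obtain ⟨Q, hQ⟩ := hl.bddAbove_range
  refine ⟨‖z‖ + √(Q / α), fun n => ?_⟩
  have hdist : ‖x n - z‖ ≤ √(Q / α) := Real.le_sqrt_of_sq_le <| by
    rw [le_div_iff₀ hα]
    linarith [hW n (x n - z), hQ ⟨n, rfl⟩]
  linarith [norm_le_insert' (x n) z]

end HilbertSpace

theorem stmt_6_general {H : Type*} [NormedAddCommGroup H] [InnerProductSpace ℝ H] [CompleteSpace H]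
    (α : ℝ) (hα : 0 < α)
    (φ : ℝ → ℝ)
    (hφmono : StrictMonoOn φ (Set.Ici (0 : ℝ)))
    (hφlim : Tendsto φ atTop atTop)
    (W : ℕ → H →L[ℝ] H) (Wl : H →L[ℝ] H)
    (hsa : ∀ n, IsSelfAdjoint (W n))
    (hlb : ∀ n (x : H), α * ‖x‖ ^ 2 ≤ (inner ℝ (W n x) x : ℝ))
    (hlbl : ∀ x : H, α * ‖x‖ ^ 2 ≤ (inner ℝ (Wl x) x : ℝ))
    (hWconv : ∀ x : H, Tendsto (fun n => W n x) atTop (𝓝 (Wl x)))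
    (C : Set H) (hC : C.Nonempty) (x : ℕ → H)
    (hfejer : ∃ η : ℕ → ℝ, (∀ n, 0 ≤ η n) ∧ Summable η ∧
      ∀ z ∈ C, ∃ ε : ℕ → ℝ, (∀ n, 0 ≤ ε n) ∧ Summable ε ∧
        ∀ n, φ (wnorm (W (n + 1)) (x (n + 1) - z)) ≤
          (1 + η n) * φ (wnorm (W n) (x n - z)) + ε n) :
    (∃ x' ∈ C, ∀ y : H, Tendsto (fun n => (inner ℝ (x n) y : ℝ)) atTop (𝓝 (inner ℝ x' y : ℝ))) ↔
      (∀ (x' : H) (p : ℕ → ℕ), StrictMono p →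
        (∀ y : H, Tendsto (fun n => (inner ℝ (x (p n)) y : ℝ)) atTop (𝓝 (inner ℝ x' y : ℝ))) →
        x' ∈ C) := by
  refine ⟨fun ⟨u, huC, hu⟩ v p hp hv => ?_, fun hcl => ?_⟩
  · exact WeakTendsto.unique (x := x ∘ p) hv (WeakTendsto.comp hu hp.tendsto_atTop) ▸ huC
  obtain ⟨η, hη0, hη, hfejer⟩ := hfejer
  have hconv : ∀ z ∈ C, ∃ l, Tendsto (fun n => ⟪W n (x n - z), x n - z⟫_ℝ) atTop (𝓝 l) := by
    intro z hz
    obtain ⟨ε, hε0, hε, hrec⟩ := hfejer z hz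
    exact exists_tendsto_inner_of_quasiFejer hφmono hφlim
      (fun n z => (by positivity : 0 ≤ α * ‖z‖ ^ 2).trans (hlb n z)) hη0 hη hε0 hε hrec
  obtain ⟨z, hz⟩ := hC
  obtain ⟨l, hl⟩ := hconv z hz
  obtain ⟨M, hM⟩ := exists_norm_le_of_tendsto_inner_sub hα hlb hl
  have hWl : ∀ z, ⟪Wl z, z⟫_ℝ = 0 → z = 0 := fun z hz0 => by
    have := hlbl z
    rw [hz0] at this
    exact norm_eq_zero.1 (pow_eq_zero_iff two_ne_zero |>.1 (by nlinarith [sq_nonneg ‖z‖]))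
  obtain ⟨p, hp, u, hu⟩ := exists_subseq_weakTendsto_of_norm_le hM
  have huC : u ∈ C := hcl u p hp hu
  refine ⟨u, huC, weakTendsto_of_forall_weakTendsto_subseq hM fun v q hq hv => ?_⟩
  exact eq_of_weakTendsto_of_tendsto_inner_sub
    (fun n => ContinuousLinearMap.isSelfAdjoint_iff_isSymmetric.1 (hsa n)) hWl hWconv hM
    (hconv v (hcl v q hq hv)) (hconv u huC) hq.tendsto_atTop hp.tendsto_atTop hv hu

theorem stmt_6 {H : Type*} [NormedAddCommGroup H] [InnerProductSpace ℝ H] [CompleteSpace H]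
    (α : ℝ) (hα : 0 < α)
    (φ : ℝ → ℝ) (hφ0 : ∀ t, 0 ≤ t → 0 ≤ φ t)
    (hφmono : StrictMonoOn φ (Set.Ici (0 : ℝ)))
    (hφlim : Tendsto φ atTop atTop)
    (W : ℕ → H →L[ℝ] H) (Wl : H →L[ℝ] H)
    (hsa : ∀ n, IsSelfAdjoint (W n)) (hsal : IsSelfAdjoint Wl)
    (hlb : ∀ n (x : H), α * ‖x‖ ^ 2 ≤ (inner ℝ (W n x) x : ℝ))
    (hlbl : ∀ x : H, α * ‖x‖ ^ 2 ≤ (inner ℝ (Wl x) x : ℝ))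
    (hWconv : ∀ x : H, Tendsto (fun n => W n x) atTop (𝓝 (Wl x)))
    (C : Set H) (hC : C.Nonempty) (x : ℕ → H)
    (hfejer : ∃ η : ℕ → ℝ, (∀ n, 0 ≤ η n) ∧ Summable η ∧
      ∀ z ∈ C, ∃ ε : ℕ → ℝ, (∀ n, 0 ≤ ε n) ∧ Summable ε ∧
        ∀ n, φ (wnorm (W (n + 1)) (x (n + 1) - z)) ≤
          (1 + η n) * φ (wnorm (W n) (x n - z)) + ε n) :
    (∃ x' ∈ C, ∀ y : H, Tendsto (fun n => (inner ℝ (x n) y : ℝ)) atTop (𝓝 (inner ℝ x' y : ℝ))) ↔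
      (∀ (x' : H) (p : ℕ → ℕ), StrictMono p →
        (∀ y : H, Tendsto (fun n => (inner ℝ (x (p n)) y : ℝ)) atTop (𝓝 (inner ℝ x' y : ℝ))) →
        x' ∈ C) :=
  stmt_6_general α hα φ hφmono hφlim W Wl hsa hlb hlbl hWconv C hC x hfejer
end

section
/- Let H be a real Hilbert space, α > 0, (νₙ) summable in [0,+∞[, and (Wₙ) self-adjoint operators with Wₙ ≽ α·Id, sup_n ‖Wₙ‖ < +∞, and (1+νₙ)Wₙ₊₁ ≽ Wₙ for all n. Let C ⊆ H have nonempty interior, with B(z;ρ) ⊆ C for some z and ρ > 0, and let (xₙ) satisfy: there exist summable (εₙ), (ηₙ) with ‖xₙ₊₁ − x‖²_{Wₙ₊₁} ≤ (1+ηₙ)‖xₙ − x‖²_{Wₙ} + εₙ for every x ∈ B(z;ρ) and every n. Then (xₙ) converges strongly. -/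
/-!
Write `Q n v = ⟪W n v, v⟫`. Testing the quasi-Fejér inequality at `w = z` bounds `Q n (x n - z)`.
Testing it at `w = z + ρ u` for unit vectors `u`, the terms that are quadratic in `u` are controlled
by `‖W n‖ ≤ μ` and the almost-monotonicity of `W n`, while the terms linear in `u` pair `u` with
`(1 + η n) W n (x n - z) - W (n + 1) (x (n + 1) - z)`. Since `u` is arbitrary, the norms of these
vectors are bounded by a telescoping sequence plus a summable one, so `y n = W n (x n - z)` is
Cauchy. On the other hand `(∏_{k<n} (1 + ν k)) W n` increases in the Loewner order, so `W n`
converges strongly to an operator `G`, coercive like the `W n`, hence invertible. Finally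
`α ‖x n - z - p‖ ≤ ‖y n - W n p‖ → 0` for the solution `p` of `G p = lim y`.
-/

open Filter Topology Finset Metric
open scoped RealInnerProductSpace

lemma Real.prod_one_add_le_exp_tsum {ν : ℕ → ℝ} (hν0 : ∀ n, 0 ≤ ν n) (hν : Summable ν) (n : ℕ) :
    ∏ k ∈ range n, (1 + ν k) ≤ Real.exp (∑' k, ν k) :=
  (Real.prod_one_add_le_exp_sum _ hν0).trans
    (Real.exp_le_exp.mpr (hν.sum_le_tsum _ fun k _ => hν0 k))

lemma exists_forall_le_of_le_one_add_mul_add {a θ e : ℕ → ℝ} (hθ0 : ∀ n, 0 ≤ θ n)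
    (he0 : ∀ n, 0 ≤ e n) (hθ : Summable θ) (he : Summable e) (ha0 : 0 ≤ a 0)
    (hrec : ∀ n, a (n + 1) ≤ (1 + θ n) * a n + e n) :
    ∃ T, ∀ n, a n ≤ T := by
  have hP1 : ∀ n, 1 ≤ ∏ k ∈ range n, (1 + θ k) := fun n =>
    one_le_prod fun k _ => by linarith [hθ0 k]
  have hbound : ∀ n, a n ≤ (∏ k ∈ range n, (1 + θ k)) * (a 0 + ∑ k ∈ range n, e k) := by
    intro n
    induction n with
    | zero => simp
    | succ n ih =>
      have hθn : 0 ≤ 1 + θ n := by linarith [hθ0 n]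
      calc a (n + 1) ≤ (1 + θ n) * a n + e n := hrec n
        _ ≤ (1 + θ n) * ((∏ k ∈ range n, (1 + θ k)) * (a 0 + ∑ k ∈ range n, e k))
            + (∏ k ∈ range (n + 1), (1 + θ k)) * e n := by
          gcongr
          exact le_mul_of_one_le_left (he0 n) (hP1 _)
        _ = _ := by rw [prod_range_succ, sum_range_succ]; ring
  refine ⟨Real.exp (∑' k, θ k) * (a 0 + ∑' k, e k), fun n => (hbound n).trans ?_⟩
  have he_sum : ∑ k ∈ range n, e k ≤ ∑' k, e k := he.sum_le_tsum _ fun k _ => he0 k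
  have hA0 : 0 ≤ a 0 + ∑ k ∈ range n, e k := add_nonneg ha0 (sum_nonneg fun k _ => he0 k)
  gcongr
  exact Real.prod_one_add_le_exp_tsum hθ0 hθ n

lemma summable_of_le_sub_succ_add {a t g : ℕ → ℝ} (ha : ∀ n, 0 ≤ a n) (ht : ∀ n, 0 ≤ t n)
    (hg0 : ∀ n, 0 ≤ g n) (hg : Summable g) (h : ∀ n, a n ≤ t n - t (n + 1) + g n) :
    Summable a := by
  refine summable_of_sum_range_le ha (c := t 0 + ∑' k, g k) fun N => ?_
  calc ∑ n ∈ range N, a n ≤ ∑ n ∈ range N, (t n - t (n + 1) + g n) := sum_le_sum fun n _ => h n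
    _ = t 0 - t N + ∑ n ∈ range N, g n := by rw [sum_add_distrib, sum_range_sub']
    _ ≤ t 0 + ∑' k, g k := by linarith [ht N, hg.sum_le_tsum (range N) fun k _ => hg0 k]

lemma exists_tendsto_of_summable_norm_one_add_smul_sub {E : Type*} [NormedAddCommGroup E]
    [NormedSpace ℝ E] [CompleteSpace E] {y : ℕ → E} {η : ℕ → ℝ} {M : ℝ} (hη0 : ∀ n, 0 ≤ η n)
    (hη : Summable η) (hM : ∀ n, ‖y n‖ ≤ M)
    (hc : Summable fun n => ‖(1 + η n) • y n - y (n + 1)‖) :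
    ∃ l, Tendsto y atTop (𝓝 l) := by
  refine cauchySeq_tendsto_of_complete (cauchySeq_of_summable_dist
    (.of_nonneg_of_le (fun _ => dist_nonneg) (fun n => ?_) (hc.add (hη.mul_right M))))
  calc dist (y n) (y (n + 1)) = ‖((1 + η n) • y n - y (n + 1)) - η n • y n‖ := by
        rw [dist_eq_norm]; congr 1; module
    _ ≤ ‖(1 + η n) • y n - y (n + 1)‖ + η n * M := by
        refine (norm_sub_le _ _).trans ?_
        rw [norm_smul, Real.norm_of_nonneg (hη0 n)]
        gcongr
        · exact hη0 n
        · exact hM n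

section InnerProductSpace

variable {H : Type*} [NormedAddCommGroup H] [InnerProductSpace ℝ H]

lemma IsSelfAdjoint.inner_map_sub_smul_self [CompleteSpace H] {T : H →L[ℝ] H}
    (hT : IsSelfAdjoint T) (v u : H) (r : ℝ) :
    ⟪T (v - r • u), v - r • u⟫ = ⟪T v, v⟫ - 2 * r * ⟪T v, u⟫ + r ^ 2 * ⟪T u, u⟫ := by
  have hsymm : ⟪T u, v⟫ = ⟪T v, u⟫ := (hT.isSymmetric u v).trans (real_inner_comm _ _)
  simp only [map_sub, map_smul, inner_sub_left, inner_sub_right, real_inner_smul_left,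
    real_inner_smul_right, hsymm]
  ring

lemma norm_le_of_forall_inner_le {c : H} {b : ℝ} (h : ∀ u, ‖u‖ ≤ 1 → ⟪c, u⟫ ≤ b) : ‖c‖ ≤ b := by
  rcases eq_or_ne c 0 with rfl | hc
  · simpa using h 0 (by simp)
  have hc' : ‖c‖ ≠ 0 := norm_ne_zero_iff.mpr hc
  have := h (‖c‖⁻¹ • c) (by rw [norm_smul, norm_inv, norm_norm, inv_mul_cancel₀ hc'])
  rwa [real_inner_smul_right, real_inner_self_eq_norm_sq, sq, inv_mul_cancel_left₀ hc'] at this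

namespace ContinuousLinearMap

lemma inner_apply_self_le (T : H →L[ℝ] H) (v : H) : ⟪T v, v⟫ ≤ ‖T‖ * ‖v‖ ^ 2 :=
  calc ⟪T v, v⟫ ≤ ‖T v‖ * ‖v‖ := real_inner_le_norm _ _
    _ ≤ ‖T‖ * ‖v‖ * ‖v‖ := by gcongr; exact T.le_opNorm v
    _ = ‖T‖ * ‖v‖ ^ 2 := by ring

lemma IsPositive.norm_apply_sq_le {T : H →L[ℝ] H} (hT : T.IsPositive) (v : H) :
    ‖T v‖ ^ 2 ≤ ‖T‖ * ⟪T v, v⟫ := by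
  have hcs : ⟪T (T v), v⟫ ^ 2 ≤ ⟪T (T v), T v⟫ * ⟪T v, v⟫ :=
    LinearMap.BilinForm.apply_sq_le_of_symm ((innerₛₗ ℝ).comp (T : H →ₗ[ℝ] H))
      hT.inner_nonneg_left ⟨fun a b => (hT.isSymmetric a b).trans (real_inner_comm _ _)⟩ (T v) v
  rw [hT.inner_left_eq_inner_right, real_inner_self_eq_norm_sq] at hcs
  have hTT := mul_le_mul_of_nonneg_right (inner_apply_self_le T (T v)) (hT.inner_nonneg_left v)
  rcases (sq_nonneg ‖T v‖).eq_or_lt with h0 | hpos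
  · rw [← h0]; exact mul_nonneg (norm_nonneg _) (hT.inner_nonneg_left v)
  · nlinarith

lemma mul_norm_le_norm_apply_of_le_inner {T : H →L[ℝ] H} {α : ℝ}
    (hT : ∀ v, α * ‖v‖ ^ 2 ≤ ⟪T v, v⟫) (v : H) : α * ‖v‖ ≤ ‖T v‖ := by
  rcases (norm_nonneg v).eq_or_lt with h0 | hpos
  · rw [← h0, mul_zero]; exact norm_nonneg _
  · refine le_of_mul_le_mul_right ?_ hpos
    calc α * ‖v‖ * ‖v‖ = α * ‖v‖ ^ 2 := by ring
      _ ≤ ‖T v‖ * ‖v‖ := (hT v).trans (real_inner_le_norm _ _)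

lemma surjective_of_le_inner [CompleteSpace H] {T : H →L[ℝ] H} {α : ℝ} (hα : 0 < α)
    (hT : ∀ v, α * ‖v‖ ^ 2 ≤ ⟪T v, v⟫) : Function.Surjective T := by
  refine (isUnit_iff_bijective.mp (isUnit_of_forall_le_norm_inner_map T (c := ⟨α, hα.le⟩) hα
    fun v => ?_)).surjective
  rw [Real.norm_eq_abs, mul_comm]
  exact (hT v).trans (le_abs_self _)

lemma exists_tendsto_apply_of_monotone [CompleteSpace H] {V : ℕ → H →L[ℝ] H} {K : ℝ}
    (hV : Monotone V) (hK : ∀ n, ‖V n‖ ≤ K) (v : H) :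
    ∃ L, Tendsto (fun n => V n v) atTop (𝓝 L) := by
  set r : ℕ → ℝ := fun n => ⟪V n v, v⟫
  have hpos : ∀ {N m}, N ≤ m → (V m - V N).IsPositive := fun h => (le_def _ _).mp (hV h)
  have hr_sub : ∀ N m, ⟪(V m - V N) v, v⟫ = r m - r N := fun N m => by
    simp only [r, sub_apply, inner_sub_left]
  have hr : Monotone r := fun N m h => sub_nonneg.mp (hr_sub N m ▸ (hpos h).inner_nonneg_left v)
  have hr_bdd : BddAbove (Set.range r) := by
    refine ⟨K * ‖v‖ ^ 2, ?_⟩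
    rintro _ ⟨n, rfl⟩
    exact (inner_apply_self_le _ v).trans (by gcongr; exact hK n)
  obtain ⟨R, hR⟩ : ∃ R, Tendsto r atTop (𝓝 R) := ⟨_, tendsto_atTop_ciSup hr hr_bdd⟩
  have hdist : ∀ N m, N ≤ m → dist (V N v) (V m v) ≤ √(2 * K * (R - r N)) := by
    intro N m h
    rw [dist_comm, dist_eq_norm, ← sub_apply]
    refine Real.le_sqrt_of_sq_le ?_
    calc ‖(V m - V N) v‖ ^ 2 ≤ ‖V m - V N‖ * ⟪(V m - V N) v, v⟫ := (hpos h).norm_apply_sq_le v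
      _ ≤ (2 * K) * (R - r N) := by
        rw [hr_sub]
        refine mul_le_mul ((norm_sub_le _ _).trans ?_) ?_ (sub_nonneg.mpr (hr h)) ?_
        · linarith [hK m, hK N]
        · linarith [hr.ge_of_tendsto hR m]
        · linarith [(norm_nonneg _).trans (hK 0)]
  refine cauchySeq_tendsto_of_complete (cauchySeq_of_le_tendsto_0' _ hdist ?_)
  simpa using ((hR.const_sub R).const_mul (2 * K)).sqrt

lemma exists_tendsto_apply_of_inner_le_one_add_mul [CompleteSpace H] {W : ℕ → H →L[ℝ] H}
    {μ : ℝ} {ν : ℕ → ℝ} (hsa : ∀ n, IsSelfAdjoint (W n)) (hμ : ∀ n, ‖W n‖ ≤ μ)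
    (hmono : ∀ n v, ⟪W n v, v⟫ ≤ (1 + ν n) * ⟪W (n + 1) v, v⟫)
    (hν0 : ∀ n, 0 ≤ ν n) (hν : Summable ν) :
    ∃ G : H →L[ℝ] H, ∀ v, Tendsto (fun n => W n v) atTop (𝓝 (G v)) := by
  set P : ℕ → ℝ := fun n => ∏ k ∈ range n, (1 + ν k)
  have hP1 : ∀ n, 1 ≤ P n := fun n => one_le_prod fun k _ => by linarith [hν0 k]
  have hP_lim : Tendsto P atTop (𝓝 (∏' k, (1 + ν k))) :=
    (Real.multipliable_one_add_of_summable hν).hasProd.tendsto_prod_nat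
  have hP_lim_pos : 0 < ∏' k, (1 + ν k) := zero_lt_one.trans_le (ge_of_tendsto' hP_lim hP1)
  have hV : Monotone fun n => P n • W n := by
    refine monotone_nat_of_le_succ fun n => ?_
    have hstep : P (n + 1) • W (n + 1) - P n • W n = P n • ((1 + ν n) • W (n + 1) - W n) := by
      simp only [P, prod_range_succ, smul_sub, smul_smul]
    rw [le_def, isPositive_iff', hstep]
    refine ⟨?_, fun v => ?_⟩
    · exact (IsSelfAdjoint.all _).smul (((IsSelfAdjoint.all _).smul (hsa (n + 1))).sub (hsa n))
    · simp only [smul_apply, sub_apply, real_inner_smul_left, inner_sub_left]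
      exact mul_nonneg (by linarith [hP1 n]) (sub_nonneg.mpr (hmono n v))
  have hV_bdd : ∀ n, ‖P n • W n‖ ≤ Real.exp (∑' k, ν k) * μ := fun n => by
    rw [norm_smul, Real.norm_of_nonneg (by linarith [hP1 n])]
    exact mul_le_mul (Real.prod_one_add_le_exp_tsum hν0 hν n) (hμ n) (norm_nonneg _)
      (Real.exp_pos _).le
  have hlim : ∀ v, ∃ L, Tendsto (fun n => W n v) atTop (𝓝 L) := by
    intro v
    obtain ⟨L, hL⟩ := exists_tendsto_apply_of_monotone hV hV_bdd v
    refine ⟨(∏' k, (1 + ν k))⁻¹ • L, ((hP_lim.inv₀ hP_lim_pos.ne').smul hL).congr fun n => ?_⟩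
    simp [smul_smul, inv_mul_cancel₀ (zero_lt_one.trans_le (hP1 n)).ne']
  choose L hL using hlim
  exact ⟨continuousLinearMapOfTendsto W (tendsto_pi_nhds.mpr hL), hL⟩

end ContinuousLinearMap

lemma two_mul_norm_sub_le_of_quasiFejer [CompleteSpace H] {A B : H →L[ℝ] H} {a b z : H}
    {ρ μ η ν ε : ℝ} (hA : IsSelfAdjoint A) (hB : IsSelfAdjoint B) (hAμ : ‖A‖ ≤ μ) (hBμ : ‖B‖ ≤ μ)
    (hAB : ∀ v, ⟪A v, v⟫ ≤ (1 + ν) * ⟪B v, v⟫) (hη : 0 ≤ η) (hν : 0 ≤ ν) (hρ : 0 < ρ)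
    (hF : ∀ w ∈ closedBall z ρ, ⟪B (b - w), b - w⟫ ≤ (1 + η) * ⟪A (a - w), a - w⟫ + ε) :
    2 * ρ * ‖(1 + η) • A (a - z) - B (b - z)‖ ≤
      (1 + η) * ⟪A (a - z), a - z⟫ - ⟪B (b - z), b - z⟫ + ρ ^ 2 * μ * (η + ν) + ε := by
  have hρ2 : 0 < 2 * ρ := by positivity
  rw [← le_div_iff₀' hρ2]
  refine norm_le_of_forall_inner_le fun u hu => ?_
  rw [le_div_iff₀' hρ2]
  have hw : z + ρ • u ∈ closedBall z ρ := by
    simpa [norm_smul, abs_of_pos hρ] using mul_le_of_le_one_right hρ.le hu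
  have h := hF _ hw
  have hsub : ∀ c, c - (z + ρ • u) = (c - z) - ρ • u := fun c => by abel
  rw [hsub, hsub, hA.inner_map_sub_smul_self, hB.inner_map_sub_smul_self] at h
  have hu2 : ‖u‖ ^ 2 ≤ 1 := pow_le_one₀ (norm_nonneg u) hu
  have hAu : ⟪A u, u⟫ ≤ μ := (A.inner_apply_self_le u).trans (by nlinarith [norm_nonneg A])
  have hBu : ⟪B u, u⟫ ≤ μ := (B.inner_apply_self_le u).trans (by nlinarith [norm_nonneg B])
  have hquad : (1 + η) * ⟪A u, u⟫ - ⟪B u, u⟫ ≤ μ * (η + ν) := by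
    nlinarith [mul_le_mul_of_nonneg_left hAu hη, mul_le_mul_of_nonneg_left hBu hν, hAB u]
  simp only [inner_sub_left, real_inner_smul_left]
  nlinarith [mul_le_mul_of_nonneg_left hquad (sq_nonneg ρ)]

lemma exists_tendsto_apply_sub_of_quasiFejer [CompleteSpace H] {W : ℕ → H →L[ℝ] H}
    {x : ℕ → H} {z : H} {ρ μ : ℝ} {ν η ε : ℕ → ℝ} (hW : ∀ n, (W n).IsPositive)
    (hμ : ∀ n, ‖W n‖ ≤ μ) (hmono : ∀ n v, ⟪W n v, v⟫ ≤ (1 + ν n) * ⟪W (n + 1) v, v⟫)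
    (hν0 : ∀ n, 0 ≤ ν n) (hν : Summable ν) (hη0 : ∀ n, 0 ≤ η n) (hη : Summable η)
    (hε0 : ∀ n, 0 ≤ ε n) (hε : Summable ε) (hρ : 0 < ρ)
    (hF : ∀ w ∈ closedBall z ρ, ∀ n,
      ⟪W (n + 1) (x (n + 1) - w), x (n + 1) - w⟫ ≤ (1 + η n) * ⟪W n (x n - w), x n - w⟫ + ε n) :
    ∃ y, Tendsto (fun n => W n (x n - z)) atTop (𝓝 y) := by
  set t : ℕ → ℝ := fun n => ⟪W n (x n - z), x n - z⟫
  have ht0 : ∀ n, 0 ≤ t n := fun n => (hW n).inner_nonneg_left _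
  obtain ⟨T, hT⟩ := exists_forall_le_of_le_one_add_mul_add hη0 hε0 hη hε (ht0 0)
    (hF z (mem_closedBall_self hρ.le))
  have hT0 : 0 ≤ T := (ht0 0).trans (hT 0)
  have hμ0 : 0 ≤ μ := (norm_nonneg _).trans (hμ 0)
  have hc : Summable fun n => ‖(1 + η n) • W n (x n - z) - W (n + 1) (x (n + 1) - z)‖ := by
    have hg0 : ∀ n, 0 ≤ η n * T + ρ ^ 2 * μ * (η n + ν n) + ε n := fun n => by
      have := hη0 n; have := hν0 n; have := hε0 n; positivity
    refine (summable_mul_left_iff (by positivity : 2 * ρ ≠ 0)).mp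
      (summable_of_le_sub_succ_add (fun n => by positivity) ht0 hg0
        (((hη.mul_right T).add ((hη.add hν).mul_left _)).add hε) fun n => ?_)
    have := two_mul_norm_sub_le_of_quasiFejer (hW n).isSelfAdjoint (hW (n + 1)).isSelfAdjoint
      (hμ n) (hμ (n + 1)) (hmono n) (hη0 n) (hν0 n) hρ (fun w hw => hF w hw n)
    nlinarith [mul_le_mul_of_nonneg_left (hT n) (hη0 n)]
  refine exists_tendsto_of_summable_norm_one_add_smul_sub hη0 hη (M := √(μ * T)) (fun n => ?_) hc
  exact Real.le_sqrt_of_sq_le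
    (((hW n).norm_apply_sq_le _).trans (mul_le_mul (hμ n) (hT n) (ht0 n) hμ0))

lemma tendsto_of_tendsto_apply_of_le_inner {W : ℕ → H →L[ℝ] H} {G : H →L[ℝ] H} {u : ℕ → H}
    {p : H} {α : ℝ} (hα : 0 < α) (hlb : ∀ n v, α * ‖v‖ ^ 2 ≤ ⟪W n v, v⟫)
    (hW : ∀ v, Tendsto (fun n => W n v) atTop (𝓝 (G v)))
    (hu : Tendsto (fun n => W n (u n)) atTop (𝓝 (G p))) : Tendsto u atTop (𝓝 p) := by
  rw [tendsto_iff_norm_sub_tendsto_zero]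
  have hlim : Tendsto (fun n => ‖W n (u n) - W n p‖ / α) atTop (𝓝 0) := by
    simpa using ((hu.sub (hW p)).norm).div_const α
  refine squeeze_zero (fun _ => norm_nonneg _) (fun n => ?_) hlim
  rw [le_div_iff₀' hα, ← map_sub]
  exact ContinuousLinearMap.mul_norm_le_norm_apply_of_le_inner (hlb n) _

end InnerProductSpace

theorem stmt_11_general {H : Type*} [NormedAddCommGroup H] [InnerProductSpace ℝ H] [CompleteSpace H]
    (α : ℝ) (hα : 0 < α)
    (ν : ℕ → ℝ) (hν0 : ∀ n, 0 ≤ ν n) (hν : Summable ν)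
    (W : ℕ → H →L[ℝ] H) (hsa : ∀ n, IsSelfAdjoint (W n))
    (hlb : ∀ n (x : H), α * ‖x‖ ^ 2 ≤ (inner ℝ (W n x) x : ℝ))
    (hbd : ∃ μ : ℝ, ∀ n, ‖W n‖ ≤ μ)
    (hmono : ∀ n (x : H), (inner ℝ (W n x) x : ℝ) ≤ (1 + ν n) * (inner ℝ (W (n + 1) x) x : ℝ))
    (z : H) (ρ : ℝ) (hρ : 0 < ρ)
    (x : ℕ → H)
    (hfejer : ∃ ε η : ℕ → ℝ, (∀ n, 0 ≤ ε n) ∧ (∀ n, 0 ≤ η n) ∧ Summable ε ∧ Summable η ∧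
      ∀ w ∈ Metric.closedBall z ρ, ∀ n,
        wnorm (W (n + 1)) (x (n + 1) - w) ^ 2 ≤
          (1 + η n) * wnorm (W n) (x n - w) ^ 2 + ε n) :
    ∃ l : H, Tendsto x atTop (𝓝 l) := by
  obtain ⟨μ, hμ⟩ := hbd
  obtain ⟨ε, η, hε0, hη0, hε, hη, hF⟩ := hfejer
  have hpos : ∀ n, (W n).IsPositive := fun n => (ContinuousLinearMap.isPositive_iff' _).mpr
    ⟨hsa n, fun v => (by positivity : 0 ≤ α * ‖v‖ ^ 2).trans (hlb n v)⟩
  simp only [wnorm, Real.sq_sqrt ((hpos _).inner_nonneg_left _)] at hF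
  obtain ⟨y, hy⟩ := exists_tendsto_apply_sub_of_quasiFejer hpos hμ hmono hν0 hν hη0 hη hε0 hε hρ hF
  obtain ⟨G, hG⟩ :=
    ContinuousLinearMap.exists_tendsto_apply_of_inner_le_one_add_mul hsa hμ hmono hν0 hν
  have hG_coercive : ∀ v, α * ‖v‖ ^ 2 ≤ ⟪G v, v⟫ := fun v =>
    ge_of_tendsto ((hG v).inner tendsto_const_nhds) (.of_forall fun n => hlb n v)
  obtain ⟨p, rfl⟩ := ContinuousLinearMap.surjective_of_le_inner hα hG_coercive y
  refine ⟨z + p, ?_⟩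
  simpa using (tendsto_of_tendsto_apply_of_le_inner hα hlb hG hy).const_add z

theorem stmt_11 {H : Type*} [NormedAddCommGroup H] [InnerProductSpace ℝ H] [CompleteSpace H]
    (α : ℝ) (hα : 0 < α)
    (ν : ℕ → ℝ) (hν0 : ∀ n, 0 ≤ ν n) (hν : Summable ν)
    (W : ℕ → H →L[ℝ] H) (hsa : ∀ n, IsSelfAdjoint (W n))
    (hlb : ∀ n (x : H), α * ‖x‖ ^ 2 ≤ (inner ℝ (W n x) x : ℝ))
    (hbd : ∃ μ : ℝ, ∀ n, ‖W n‖ ≤ μ)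
    (hmono : ∀ n (x : H), (inner ℝ (W n x) x : ℝ) ≤ (1 + ν n) * (inner ℝ (W (n + 1) x) x : ℝ))
    (C : Set H) (z : H) (ρ : ℝ) (hρ : 0 < ρ)
    (hball : Metric.closedBall z ρ ⊆ C)
    (x : ℕ → H)
    (hfejer : ∃ ε η : ℕ → ℝ, (∀ n, 0 ≤ ε n) ∧ (∀ n, 0 ≤ η n) ∧ Summable ε ∧ Summable η ∧
      ∀ w ∈ Metric.closedBall z ρ, ∀ n,
        wnorm (W (n + 1)) (x (n + 1) - w) ^ 2 ≤
          (1 + η n) * wnorm (W n) (x n - w) ^ 2 + ε n) :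
    ∃ l : H, Tendsto x atTop (𝓝 l) :=
  stmt_11_general α hα ν hν0 hν W hsa hlb hbd hmono z ρ hρ x hfejer
end

section
/- In the setting of the variable metric proximal point algorithm xₙ₊₁ = xₙ + λₙ(J^{Wₙ}_{γₙA} xₙ + aₙ − xₙ) (A maximally monotone with nonempty zero set C, λₙ ∈ [ε, 2−ε], γₙ ≥ ε, ∑‖aₙ‖ < +∞, α·Id ≼ Wₙ, sup‖Wₙ‖ < +∞, (1+ηₙ)Wₙ ≽ Wₙ₊₁ with (ηₙ) summable), if A is pointwise uniformly monotone on C — for every x ∈ C there is an increasing function φ : [0,+∞[ → [0,+∞] vanishing only at 0 with ⟨x − y, u − v⟩ ≥ φ(‖x − y‖) for all u ∈ Ax and (y,v) in the graph of A — then (xₙ) converges strongly to the unique point of C. -/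
/-!
Let `p` be a zero of `A`, `yₙ = J xₙ` and `vₙ ∈ A yₙ` with `γₙ vₙ = Wₙ (xₙ - yₙ)`. The relaxed
resolvent step obeys the variable-metric Fejér identity
`‖x + λ (y - x) - p‖²_W = ‖x - p‖²_W - 2λγ ⟨y - p, v⟩ - λ (2 - λ) ‖y - x‖²_W`,
so after absorbing the errors `aₙ` (triangle inequality for `‖·‖_W`) and the metric drift
`(1 + ηₙ)`, the distances `‖xₙ - p‖_{Wₙ}` form a quasi-Fejér sequence: they stay bounded and the
losses `⟨yₙ - p, vₙ⟩` and `‖yₙ - xₙ‖²` are summable. Uniform monotonicity at `p` gives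
`φ ‖yₙ - p‖ ≤ ⟨yₙ - p, vₙ⟩ → 0`, hence `yₙ → p`, and `xₙ - yₙ → 0` gives `xₙ → p`.
-/

open Filter Topology Pointwise

def MaxMonotone {H : Type*} [NormedAddCommGroup H] [InnerProductSpace ℝ H]
    (A : H → Set H) : Prop :=
  (∀ x y u v, u ∈ A x → v ∈ A y → 0 ≤ (inner ℝ (x - y) (u - v) : ℝ)) ∧
  (∀ x u, (∀ y v, v ∈ A y → 0 ≤ (inner ℝ (x - y) (u - v) : ℝ)) → u ∈ A x)

open scoped RealInnerProductSpace

noncomputable def weightedNorm {H : Type*} [NormedAddCommGroup H] [InnerProductSpace ℝ H]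
    (W : H →L[ℝ] H) (z : H) : ℝ :=
  √⟪W z, z⟫

theorem weightedNorm_nonneg {H : Type*} [NormedAddCommGroup H] [InnerProductSpace ℝ H]
    (W : H →L[ℝ] H) (z : H) : 0 ≤ weightedNorm W z :=
  Real.sqrt_nonneg _

section WeightedNorm

variable {H : Type*} [NormedAddCommGroup H] [InnerProductSpace ℝ H] {W : H →L[ℝ] H}

theorem real_inner_apply_add_smul_self (hW : W.IsSymmetric) (u d : H) (t : ℝ) :
    ⟪W (u + t • d), u + t • d⟫ = ⟪W u, u⟫ + 2 * t * ⟪W u, d⟫ + t ^ 2 * ⟪W d, d⟫ := by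
  have hdu : ⟪W d, u⟫ = ⟪W u, d⟫ := by rw [real_inner_comm]; exact (hW u d).symm
  simp only [map_add, map_smul, inner_add_left, inner_add_right, real_inner_smul_left,
    real_inner_smul_right, hdu]
  ring

theorem sq_weightedNorm (hW : W.IsPositive) (z : H) : weightedNorm W z ^ 2 = ⟪W z, z⟫ :=
  Real.sq_sqrt (hW.inner_nonneg_left z)

theorem weightedNorm_smul (c : ℝ) (z : H) :
    weightedNorm W (c • z) = |c| * weightedNorm W z := by
  rw [weightedNorm, weightedNorm, map_smul, real_inner_smul_left, real_inner_smul_right,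
    ← mul_assoc, ← sq, Real.sqrt_mul (sq_nonneg c), Real.sqrt_sq_eq_abs]

theorem real_inner_apply_le_weightedNorm_mul (hW : W.IsPositive) (x y : H) :
    ⟪W x, y⟫ ≤ weightedNorm W x * weightedNorm W y := by
  let B : LinearMap.BilinForm ℝ H := (innerₗ H).compl₁₂ (W : H →ₗ[ℝ] H) LinearMap.id
  have hB : ⟪W x, y⟫ ^ 2 ≤ ⟪W x, x⟫ * ⟪W y, y⟫ := by
    have := B.apply_mul_apply_le_of_forall_zero_le hW.inner_nonneg_left x y
    simp only [B, LinearMap.compl₁₂_apply, innerₗ_apply_apply, ContinuousLinearMap.coe_coe,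
      LinearMap.id_apply] at this
    rwa [hW.inner_left_eq_inner_right y x, real_inner_comm (W x) y, ← sq] at this
  rw [weightedNorm, weightedNorm, ← Real.sqrt_mul (hW.inner_nonneg_left x)]
  exact Real.le_sqrt_of_sq_le hB

theorem weightedNorm_add_le (hW : W.IsPositive) (x y : H) :
    weightedNorm W (x + y) ≤ weightedNorm W x + weightedNorm W y := by
  rw [weightedNorm,
    Real.sqrt_le_left (add_nonneg (weightedNorm_nonneg W x) (weightedNorm_nonneg W y)),
    ← one_smul ℝ y, real_inner_apply_add_smul_self hW.isSymmetric x y 1, one_smul,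
    ← sq_weightedNorm hW x, ← sq_weightedNorm hW y]
  linarith [real_inner_apply_le_weightedNorm_mul hW x y]

theorem weightedNorm_le (z : H) : weightedNorm W z ≤ √‖W‖ * ‖z‖ := by
  rw [weightedNorm, ← Real.sqrt_sq (norm_nonneg z), ← Real.sqrt_mul (norm_nonneg _)]
  refine Real.sqrt_le_sqrt ?_
  calc ⟪W z, z⟫ ≤ ‖W z‖ * ‖z‖ := real_inner_le_norm _ _
    _ ≤ ‖W‖ * ‖z‖ * ‖z‖ := by gcongr; exact W.le_opNorm z
    _ = ‖W‖ * ‖z‖ ^ 2 := by ring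

end WeightedNorm

section QuasiFejer

open Finset

variable {β c η t : ℕ → ℝ}

theorem le_prod_one_add_mul_add_sum (hc : ∀ n, 0 ≤ c n) (hη : ∀ n, 0 ≤ η n)
    (hrec : ∀ n, β (n + 1) ≤ (1 + η n) * (β n + c n)) (n : ℕ) :
    β n ≤ (∏ k ∈ range n, (1 + η k)) * (β 0 + ∑ k ∈ range n, c k) := by
  induction n with
  | zero => simp
  | succ n ih =>
    have hP : 1 ≤ ∏ k ∈ range n, (1 + η k) :=
      one_le_prod fun k _ => le_add_of_nonneg_right (hη k)
    rw [prod_range_succ, sum_range_succ]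
    calc β (n + 1) ≤ (1 + η n) * (β n + c n) := hrec n
      _ ≤ (1 + η n) * ((∏ k ∈ range n, (1 + η k)) * (β 0 + ∑ k ∈ range n, c k)
            + (∏ k ∈ range n, (1 + η k)) * c n) := by
        gcongr
        · linarith [hη n]
        · exact le_mul_of_one_le_left (hc n) hP
      _ = _ := by ring

theorem le_exp_tsum_mul_add_tsum (hβ : 0 ≤ β 0) (hc : ∀ n, 0 ≤ c n) (hη : ∀ n, 0 ≤ η n)
    (hc_sum : Summable c) (hη_sum : Summable η)
    (hrec : ∀ n, β (n + 1) ≤ (1 + η n) * (β n + c n)) (n : ℕ) :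
    β n ≤ Real.exp (∑' k, η k) * (β 0 + ∑' k, c k) := by
  have hprod : ∏ k ∈ range n, (1 + η k) ≤ Real.exp (∑' k, η k) :=
    calc ∏ k ∈ range n, (1 + η k) ≤ ∏ k ∈ range n, Real.exp (η k) :=
          prod_le_prod (fun k _ => by linarith [hη k]) fun k _ => by
            linarith [Real.add_one_le_exp (η k)]
      _ = Real.exp (∑ k ∈ range n, η k) := (Real.exp_sum _ _).symm
      _ ≤ Real.exp (∑' k, η k) := Real.exp_le_exp.2 (hη_sum.sum_le_tsum _ fun k _ => hη k)
  calc β n ≤ (∏ k ∈ range n, (1 + η k)) * (β 0 + ∑ k ∈ range n, c k) :=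
        le_prod_one_add_mul_add_sum hc hη hrec n
    _ ≤ Real.exp (∑' k, η k) * (β 0 + ∑' k, c k) := by
      gcongr
      · exact add_nonneg hβ (sum_nonneg fun k _ => hc k)
      · exact hc_sum.sum_le_tsum _ fun k _ => hc k

theorem summable_of_sq_le_one_add_mul_sq_sub (hβ : ∀ n, 0 ≤ β n) (hc : ∀ n, 0 ≤ c n)
    (hη : ∀ n, 0 ≤ η n) (ht : ∀ n, 0 ≤ t n) (hc_sum : Summable c) (hη_sum : Summable η)
    (hrec : ∀ n, β (n + 1) ^ 2 ≤ (1 + η n) * ((β n + c n) ^ 2 - t n)) :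
    Summable t := by
  have hlin (n : ℕ) : β (n + 1) ≤ (1 + η n) * (β n + c n) := by
    have hη₁ : 1 ≤ 1 + η n := le_add_of_nonneg_right (hη n)
    refine (pow_le_pow_iff_left₀ (hβ _) (by positivity [hβ n, hc n]) two_ne_zero).1 ?_
    calc β (n + 1) ^ 2 ≤ (1 + η n) * (β n + c n) ^ 2 := by nlinarith [ht n, hrec n]
      _ ≤ ((1 + η n) * (β n + c n)) ^ 2 := by nlinarith [sq_nonneg (β n + c n)]
  set M := Real.exp (∑' k, η k) * (β 0 + ∑' k, c k)
  set C := ∑' k, c k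
  have hM n : β n ≤ M := le_exp_tsum_mul_add_tsum (hβ 0) hc hη hc_sum hη_sum hlin n
  have hC n : c n ≤ C := hc_sum.le_tsum n fun k _ => hc k
  set e := fun n => c n * (2 * M + C) + η n * (M + C) ^ 2
  have he_sum : Summable e := (hc_sum.mul_right _).add (hη_sum.mul_right _)
  have hdesc n : t n ≤ β n ^ 2 - β (n + 1) ^ 2 + e n := by
    have hsq : (β n + c n) ^ 2 ≤ (M + C) ^ 2 := by
      gcongr
      · positivity [hβ n, hc n]
      · exact hM n
      · exact hC n
    have : c n * (2 * β n + c n) ≤ c n * (2 * M + C) :=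
      mul_le_mul_of_nonneg_left (by linarith [hM n, hC n]) (hc n)
    nlinarith [hrec n, mul_le_mul_of_nonneg_left hsq (hη n), mul_nonneg (hη n) (ht n)]
  refine summable_of_sum_range_le ht (c := β 0 ^ 2 + ∑' k, e k) fun n => ?_
  calc ∑ k ∈ range n, t k ≤ ∑ k ∈ range n, (β k ^ 2 - β (k + 1) ^ 2 + e k) :=
        sum_le_sum fun k _ => hdesc k
    _ = β 0 ^ 2 - β n ^ 2 + ∑ k ∈ range n, e k := by
      rw [sum_add_distrib, sum_range_sub']
    _ ≤ β 0 ^ 2 + ∑' k, e k := by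
      have := he_sum.sum_le_tsum (range n) fun k _ =>
        add_nonneg (mul_nonneg (hc k) (by linarith [hβ k, hM k, hc k, hC k]))
          (mul_nonneg (hη k) (sq_nonneg _))
      nlinarith [sq_nonneg (β n)]

end QuasiFejer

section RelaxedStep

variable {H : Type*} [NormedAddCommGroup H] [InnerProductSpace ℝ H] {W : H →L[ℝ] H}

theorem real_inner_apply_relaxed_step_eq (hW : W.IsSymmetric) {x y p v : H} {γ : ℝ}
    (hv : γ • v = W (x - y)) (lam : ℝ) :
    ⟪W (x - p + lam • (y - x)), x - p + lam • (y - x)⟫ =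
      ⟪W (x - p), x - p⟫ - 2 * lam * γ * ⟪y - p, v⟫ - lam * (2 - lam) * ⟪W (y - x), y - x⟫ := by
  have hcross : γ * ⟪y - p, v⟫ = -⟪W (x - p), y - x⟫ - ⟪W (y - x), y - x⟫ := by
    have hsym : ⟪y - p, W (x - y)⟫ = ⟪W (y - p), x - y⟫ := (hW _ _).symm
    rw [← real_inner_smul_right, hv, hsym, show x - y = -(y - x) by abel,
      show y - p = (x - p) + (y - x) by abel, inner_neg_right, map_add, inner_add_left]
    ring
  rw [real_inner_apply_add_smul_self hW]
  linear_combination (2 * lam) * hcross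

theorem real_inner_apply_relaxed_step_le (hW : W.IsPositive) {α ε γ lam : ℝ} {x y p v : H}
    (hcoer : ∀ z, α * ‖z‖ ^ 2 ≤ ⟪W z, z⟫) (hε : 0 ≤ ε) (hγ : ε ≤ γ)
    (hlam : lam ∈ Set.Icc ε (2 - ε)) (hv : γ • v = W (x - y)) (hs : 0 ≤ ⟪y - p, v⟫) :
    ⟪W (x - p + lam • (y - x)), x - p + lam • (y - x)⟫ ≤
      ⟪W (x - p), x - p⟫ - ε ^ 2 * (2 * ⟪y - p, v⟫ + α * ‖y - x‖ ^ 2) := by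
  obtain ⟨hlam₁, hlam₂⟩ := hlam
  rw [real_inner_apply_relaxed_step_eq hW.isSymmetric hv]
  have hγs : ε ^ 2 * ⟪y - p, v⟫ ≤ lam * γ * ⟪y - p, v⟫ := by
    gcongr
    rw [sq]; exact mul_le_mul hlam₁ hγ hε (hε.trans hlam₁)
  have hd : ε ^ 2 * (α * ‖y - x‖ ^ 2) ≤ lam * (2 - lam) * ⟪W (y - x), y - x⟫ :=
    calc ε ^ 2 * (α * ‖y - x‖ ^ 2) ≤ ε ^ 2 * ⟪W (y - x), y - x⟫ := by gcongr; exact hcoer _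
      _ ≤ lam * (2 - lam) * ⟪W (y - x), y - x⟫ := by
        gcongr
        · exact hW.inner_nonneg_left _
        · rw [sq]; exact mul_le_mul hlam₁ (by linarith) hε (hε.trans hlam₁)
  linarith

theorem sq_weightedNorm_relaxed_step_le (hW : W.IsPositive) {α ε γ lam : ℝ} {x y a p v : H}
    (hα : 0 ≤ α) (hcoer : ∀ z, α * ‖z‖ ^ 2 ≤ ⟪W z, z⟫) (hε : 0 ≤ ε) (hγ : ε ≤ γ)
    (hlam : lam ∈ Set.Icc ε (2 - ε)) (hv : γ • v = W (x - y)) (hs : 0 ≤ ⟪y - p, v⟫) :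
    weightedNorm W (x + lam • (y + a - x) - p) ^ 2 ≤
      (weightedNorm W (x - p) + 2 * weightedNorm W a) ^ 2
        - ε ^ 2 * (2 * ⟪y - p, v⟫ + α * ‖y - x‖ ^ 2) := by
  set X := x - p + lam • (y - x)
  have hX := real_inner_apply_relaxed_step_le hW hcoer hε hγ hlam hv hs
  rw [← sq_weightedNorm hW, ← sq_weightedNorm hW] at hX
  have hloss : 0 ≤ ε ^ 2 * (2 * ⟪y - p, v⟫ + α * ‖y - x‖ ^ 2) := by positivity
  have hXle : weightedNorm W X ≤ weightedNorm W (x - p) :=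
    (pow_le_pow_iff_left₀ (weightedNorm_nonneg W X) (weightedNorm_nonneg W _) two_ne_zero).1
      (by linarith)
  have hlam_abs : |lam| ≤ 2 := abs_le.2 ⟨by linarith [hlam.1], by linarith [hlam.2]⟩
  have htri :
      weightedNorm W (x + lam • (y + a - x) - p) ≤ weightedNorm W X + 2 * weightedNorm W a :=
    calc weightedNorm W (x + lam • (y + a - x) - p) = weightedNorm W (X + lam • a) := by
          congr 1; simp only [X]; module
      _ ≤ weightedNorm W X + |lam| * weightedNorm W a :=
          (weightedNorm_add_le hW X _).trans_eq (by rw [weightedNorm_smul])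
      _ ≤ weightedNorm W X + 2 * weightedNorm W a := by
          gcongr; exact weightedNorm_nonneg W a
  calc weightedNorm W (x + lam • (y + a - x) - p) ^ 2
      ≤ (weightedNorm W X + 2 * weightedNorm W a) ^ 2 := by
        gcongr; exact weightedNorm_nonneg W _
    _ ≤ _ := by nlinarith [weightedNorm_nonneg W a, weightedNorm_nonneg W X]

end RelaxedStep

theorem tendsto_zero_of_forcing_le_ofReal {φ : ℝ → ENNReal} (hφ : Monotone φ)
    (hφpos : ∀ r, 0 < r → φ r ≠ 0) {w s : ℕ → ℝ} (hw : ∀ n, 0 ≤ w n)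
    (hle : ∀ n, φ (w n) ≤ ENNReal.ofReal (s n)) (hs : Tendsto s atTop (𝓝 0)) :
    Tendsto w atTop (𝓝 0) := by
  have hs' : Tendsto (fun n => ENNReal.ofReal (s n)) atTop (𝓝 0) := by
    simpa using ENNReal.tendsto_ofReal hs
  refine tendsto_order.2 ⟨fun r hr => .of_forall fun n => hr.trans_le (hw n), fun r hr => ?_⟩
  filter_upwards [hs'.eventually (gt_mem_nhds (pos_iff_ne_zero.2 (hφpos r hr)))] with n hn
  by_contra! hrn
  exact (hn.trans_le' ((hφ hrn).trans (hle n))).false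

theorem summable_relaxed_step_loss {H : Type*} [NormedAddCommGroup H] [InnerProductSpace ℝ H]
    {α ε μ : ℝ} {W : ℕ → H →L[ℝ] H} {η γ lam : ℕ → ℝ} {x y a v : ℕ → H} {p : H}
    (hW : ∀ n, (W n).IsPositive) (hα : 0 ≤ α) (hcoer : ∀ n z, α * ‖z‖ ^ 2 ≤ ⟪W n z, z⟫)
    (hμ : ∀ n, ‖W n‖ ≤ μ) (hη0 : ∀ n, 0 ≤ η n) (hη : Summable η)
    (hmono : ∀ n z, ⟪W (n + 1) z, z⟫ ≤ (1 + η n) * ⟪W n z, z⟫)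
    (hε : 0 < ε) (hγ : ∀ n, ε ≤ γ n) (hlam : ∀ n, lam n ∈ Set.Icc ε (2 - ε))
    (ha : Summable fun n => ‖a n‖) (hv : ∀ n, γ n • v n = W n (x n - y n))
    (hs : ∀ n, 0 ≤ ⟪y n - p, v n⟫) (hrec : ∀ n, x (n + 1) = x n + lam n • (y n + a n - x n)) :
    Summable fun n => 2 * ⟪y n - p, v n⟫ + α * ‖y n - x n‖ ^ 2 := by
  set β := fun n => weightedNorm (W n) (x n - p)
  set c := fun n => 2 * weightedNorm (W n) (a n)
  have hstep n : β (n + 1) ^ 2 ≤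
      (1 + η n) * ((β n + c n) ^ 2 - ε ^ 2 * (2 * ⟪y n - p, v n⟫ + α * ‖y n - x n‖ ^ 2)) := by
    show weightedNorm (W (n + 1)) (x (n + 1) - p) ^ 2 ≤ _
    rw [sq_weightedNorm (hW _), hrec n]
    refine (hmono n _).trans (mul_le_mul_of_nonneg_left ?_ (by linarith [hη0 n]))
    rw [← sq_weightedNorm (hW n)]
    exact sq_weightedNorm_relaxed_step_le (hW n) hα (hcoer n) hε.le (hγ n) (hlam n) (hv n) (hs n)
  have hc_sum : Summable c := by
    refine .of_nonneg_of_le (fun n => by positivity [weightedNorm_nonneg (W n) (a n)])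
      (fun n => ?_) (ha.mul_left (2 * √μ))
    have hμn : √‖W n‖ * ‖a n‖ ≤ √μ * ‖a n‖ := by gcongr; exact hμ n
    linarith [weightedNorm_le (W := W n) (a n)]
  refine (summable_mul_left_iff (pow_ne_zero 2 hε.ne')).1 ?_
  exact summable_of_sq_le_one_add_mul_sq_sub (fun n => weightedNorm_nonneg (W n) (x n - p))
    (fun n => by positivity [weightedNorm_nonneg (W n) (a n)]) hη0
    (fun n => by positivity [hs n]) hc_sum hη hstep

theorem tendsto_of_summable_loss {H : Type*} [NormedAddCommGroup H] [InnerProductSpace ℝ H]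
    {φ : ℝ → ENNReal} (hφ : Monotone φ) (hφpos : ∀ r, 0 < r → φ r ≠ 0) {α : ℝ} (hα : 0 < α)
    {x y v : ℕ → H} {p : H} (hs : ∀ n, 0 ≤ ⟪y n - p, v n⟫)
    (hforce : ∀ n, φ ‖y n - p‖ ≤ ENNReal.ofReal ⟪y n - p, v n⟫)
    (hloss : Summable fun n => 2 * ⟪y n - p, v n⟫ + α * ‖y n - x n‖ ^ 2) :
    Tendsto x atTop (𝓝 p) := by
  have hloss₀ := hloss.tendsto_atTop_zero
  have hy : Tendsto y atTop (𝓝 p) := by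
    refine tendsto_iff_norm_sub_tendsto_zero.2 <| tendsto_zero_of_forcing_le_ofReal hφ hφpos
      (fun n => norm_nonneg _) hforce ?_
    refine squeeze_zero hs (fun n => ?_) (by simpa using hloss₀.div_const 2)
    linarith [mul_nonneg hα.le (sq_nonneg ‖y n - x n‖)]
  have hyx : Tendsto (fun n => y n - x n) atTop (𝓝 0) := by
    refine tendsto_zero_iff_norm_tendsto_zero.2 <| squeeze_zero (fun n => norm_nonneg _)
      (fun n => Real.le_sqrt_of_sq_le ?_) (by simpa using (hloss₀.div_const α).sqrt)
    rw [le_div_iff₀ hα]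
    linarith [hs n]
  simpa using hy.sub hyx

theorem stmt_18_general {H : Type*} [NormedAddCommGroup H] [InnerProductSpace ℝ H] [CompleteSpace H]
    (α : ℝ) (hα : 0 < α)
    (A : H → Set H) (hA : MaxMonotone A) (hzero : ∃ z : H, 0 ∈ A z)
    (a : ℕ → H) (ha : Summable (fun n => ‖a n‖))
    (η : ℕ → ℝ) (hη0 : ∀ n, 0 ≤ η n) (hη : Summable η)
    (W : ℕ → H →L[ℝ] H) (hsa : ∀ n, IsSelfAdjoint (W n))
    (hlb : ∀ n (x : H), α * ‖x‖ ^ 2 ≤ (inner ℝ (W n x) x : ℝ))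
    (hbd : ∃ μ : ℝ, ∀ n, ‖W n‖ ≤ μ)
    (hmono : ∀ n (x : H), (inner ℝ (W (n + 1) x) x : ℝ) ≤ (1 + η n) * (inner ℝ (W n x) x : ℝ))
    (ε : ℝ) (hε0 : 0 < ε)
    (γ : ℕ → ℝ) (hγ : ∀ n, ε ≤ γ n)
    (lam : ℕ → ℝ) (hlam : ∀ n, lam n ∈ Set.Icc ε (2 - ε))
    (J : ℕ → H → H)
    (hJ : ∀ n (y : H), W n y - W n (J n y) ∈ γ n • A (J n y))
    (x : ℕ → H)
    (hrec : ∀ n, x (n + 1) = x n + lam n • (J n (x n) + a n - x n))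
    (hunif : ∀ xc : H, 0 ∈ A xc → ∃ φ : ℝ → ENNReal, Monotone φ ∧ φ 0 = 0 ∧
      (∀ t : ℝ, 0 < t → φ t ≠ 0) ∧
      ∀ (u y v : H), u ∈ A xc → v ∈ A y →
        φ ‖xc - y‖ ≤ ENNReal.ofReal (inner ℝ (xc - y) (u - v) : ℝ)) :
    ∃ x' : H, (∀ z : H, 0 ∈ A z ↔ z = x') ∧ Tendsto x atTop (𝓝 x') := by
  obtain ⟨p, hp⟩ := hzero
  obtain ⟨φ, hφ, -, hφpos, hφA⟩ := hunif p hp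
  have hforce (y v : H) (hv : v ∈ A y) : φ ‖y - p‖ ≤ ENNReal.ofReal ⟪y - p, v⟫ := by
    have h := hφA 0 y v hp hv
    rwa [norm_sub_rev, zero_sub, ← neg_sub y p, inner_neg_neg] at h
  refine ⟨p, fun z => ⟨fun hz => ?_, fun hz => hz ▸ hp⟩, ?_⟩
  · by_contra hzp
    exact hφpos _ (norm_pos_iff.2 (sub_ne_zero.2 hzp)) (by simpa using hforce z 0 hz)
  choose v hvA hv using fun n => Set.mem_smul_set.1 (hJ n (x n))
  set y := fun n => J n (x n)
  have hs n : 0 ≤ ⟪y n - p, v n⟫ := by simpa using hA.1 (y n) p (v n) 0 (hvA n) hp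
  have hWpos n : (W n).IsPositive :=
    ((W n).isPositive_iff').2 ⟨hsa n, fun z => (mul_nonneg hα.le (sq_nonneg _)).trans (hlb n z)⟩
  obtain ⟨μ, hμ⟩ := hbd
  exact tendsto_of_summable_loss hφ hφpos hα hs (fun n => hforce _ _ (hvA n)) <|
    summable_relaxed_step_loss hWpos hα.le hlb hμ hη0 hη hmono hε0 hγ hlam ha
      (fun n => (hv n).trans (map_sub _ _ _).symm) hs hrec

theorem stmt_18 {H : Type*} [NormedAddCommGroup H] [InnerProductSpace ℝ H] [CompleteSpace H]
    (α : ℝ) (hα : 0 < α)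
    (A : H → Set H) (hA : MaxMonotone A) (hzero : ∃ z : H, 0 ∈ A z)
    (a : ℕ → H) (ha : Summable (fun n => ‖a n‖))
    (η : ℕ → ℝ) (hη0 : ∀ n, 0 ≤ η n) (hη : Summable η)
    (W : ℕ → H →L[ℝ] H) (hsa : ∀ n, IsSelfAdjoint (W n))
    (hlb : ∀ n (x : H), α * ‖x‖ ^ 2 ≤ (inner ℝ (W n x) x : ℝ))
    (hbd : ∃ μ : ℝ, ∀ n, ‖W n‖ ≤ μ)
    (hmono : ∀ n (x : H), (inner ℝ (W (n + 1) x) x : ℝ) ≤ (1 + η n) * (inner ℝ (W n x) x : ℝ))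
    (ε : ℝ) (hε0 : 0 < ε) (hε1 : ε < 1)
    (γ : ℕ → ℝ) (hγ : ∀ n, ε ≤ γ n)
    (lam : ℕ → ℝ) (hlam : ∀ n, lam n ∈ Set.Icc ε (2 - ε))
    (J : ℕ → H → H)
    (hJ : ∀ n (y : H), W n y - W n (J n y) ∈ γ n • A (J n y))
    (x : ℕ → H)
    (hrec : ∀ n, x (n + 1) = x n + lam n • (J n (x n) + a n - x n))
    (hunif : ∀ xc : H, 0 ∈ A xc → ∃ φ : ℝ → ENNReal, Monotone φ ∧ φ 0 = 0 ∧
      (∀ t : ℝ, 0 < t → φ t ≠ 0) ∧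
      ∀ (u y v : H), u ∈ A xc → v ∈ A y →
        φ ‖xc - y‖ ≤ ENNReal.ofReal (inner ℝ (xc - y) (u - v) : ℝ)) :
    ∃ x' : H, (∀ z : H, 0 ∈ A z ↔ z = x') ∧ Tendsto x atTop (𝓝 x') :=
  stmt_18_general α hα A hA hzero a ha η hη0 hη W hsa hlb hbd hmono ε hε0 γ hγ lam hlam J hJ x hrec
    hunif
end
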